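/- arXiv:2506.03060 — 3 statements merged into one kernel-verified Lean document; each statement's English description precedes it below -/
import Mathlib

section
/- Let ρ be a density matrix on a finite-dimensional Hilbert space A, and σ, M positive semidefinite operators on A. Then the fidelity between √M ρ √M and σ is bounded as ||(√M ρ √M)^{1/2} σ^{1/2}||₁² ≤ tr[M σ]. -/
open scoped Kronecker ComplexOrder
open Matrix

attribute [local instance] Classical.propDecidable

noncomputable section

namespace QIT

/-- Apply a real function to a Hermitian matrix via its spectral decomposition
(returns `0` on non-Hermitian input). -/
def mfun {n : Type*} [Fintype n] [DecidableEq n] (A : Matrix n n ℂ) (f : ℝ → ℝ) :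
    Matrix n n ℂ :=
  if hA : A.IsHermitian then
    (hA.eigenvectorUnitary : Matrix n n ℂ) *
      Matrix.diagonal (fun i => (f (hA.eigenvalues i) : ℂ)) *
      star (hA.eigenvectorUnitary : Matrix n n ℂ)
  else 0

/-- Operator power `A ^ p` (via the spectral decomposition, `0 ^ q = 0` for `q ≠ 0`,
so negative powers are taken on the support). -/
def mpow {n : Type*} [Fintype n] [DecidableEq n] (A : Matrix n n ℂ) (p : ℝ) :
    Matrix n n ℂ :=
  mfun A fun x => Real.rpow x p

/-- Operator logarithm (on the support). -/
def mlog {n : Type*} [Fintype n] [DecidableEq n] (A : Matrix n n ℂ) : Matrix n n ℂ :=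
  mfun A Real.log

/-- Positive semidefinite square root. -/
def msqrt {n : Type*} [Fintype n] [DecidableEq n] (A : Matrix n n ℂ) : Matrix n n ℂ :=
  mfun A Real.sqrt

/-- Trace norm `‖A‖₁ = tr √(AᴴA)`. -/
def traceNorm {n : Type*} [Fintype n] [DecidableEq n] (A : Matrix n n ℂ) : ℝ :=
  ((msqrt (Aᴴ * A)).trace).re

/-- Von Neumann entropy `H(ρ) = -tr[ρ log ρ]`. -/
def vnEntropy {n : Type*} [Fintype n] [DecidableEq n] (ρ : Matrix n n ℂ) : ℝ :=
  -(((ρ * mlog ρ).trace).re)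

/-- Umegaki relative entropy `D(ρ‖σ) = tr[ρ (log ρ - log σ)]` if `supp ρ ⊆ supp σ`,
and `+∞` otherwise. -/
def relEntropy {n : Type*} [Fintype n] [DecidableEq n] (ρ σ : Matrix n n ℂ) : EReal :=
  if ∀ x : n → ℂ, σ.mulVec x = 0 → ρ.mulVec x = 0 then
    ((((ρ * (mlog ρ - mlog σ)).trace).re : ℝ) : EReal)
  else ⊤

/-- Fidelity for subnormalized states. -/
def fidelity {n : Type*} [Fintype n] [DecidableEq n] (ρ σ : Matrix n n ℂ) : ℝ :=
  traceNorm (msqrt ρ * msqrt σ) +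
    Real.sqrt ((1 - ρ.trace.re) * (1 - σ.trace.re))

/-- Purified distance. -/
def pdist {n : Type*} [Fintype n] [DecidableEq n] (ρ σ : Matrix n n ℂ) : ℝ :=
  Real.sqrt (1 - fidelity ρ σ ^ 2)

/-- Density matrices. -/
def IsDensity {n : Type*} [Fintype n] (ρ : Matrix n n ℂ) : Prop :=
  ρ.PosSemidef ∧ ρ.trace = 1

/-- Maximum (real) eigenvalue. -/
def lamMax {n : Type*} [Fintype n] [DecidableEq n] (A : Matrix n n ℂ) : ℝ :=
  sSup {t : ℝ | (t : ℂ) ∈ spectrum ℂ A}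

/-- Partial trace over the first tensor factor. -/
def ptraceFst {a b : Type*} [Fintype a] (ρ : Matrix (a × b) (a × b) ℂ) :
    Matrix b b ℂ :=
  Matrix.of fun i j => ∑ k, ρ (k, i) (k, j)

/-- Partial trace over the second tensor factor. -/
def ptraceSnd {a b : Type*} [Fintype b] (ρ : Matrix (a × b) (a × b) ℂ) :
    Matrix a a ℂ :=
  Matrix.of fun i j => ∑ k, ρ (i, k) (j, k)

/-- `id_R ⊗ Φ` applied entrywise (reference system first). -/
def idTens {r a b : Type*} (Φ : Matrix a a ℂ → Matrix b b ℂ)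
    (ρ : Matrix (r × a) (r × a) ℂ) : Matrix (r × b) (r × b) ℂ :=
  Matrix.of fun p q => Φ (Matrix.of fun s t => ρ (p.1, s) (q.1, t)) p.2 q.2

/-- `Φ ⊗ id_R` applied entrywise (reference system second). -/
def tensId {r a b : Type*} (Φ : Matrix a a ℂ → Matrix b b ℂ)
    (ρ : Matrix (a × r) (a × r) ℂ) : Matrix (b × r) (b × r) ℂ :=
  Matrix.of fun p q => Φ (Matrix.of fun s t => ρ (s, p.2) (t, q.2)) p.1 q.1

/-- Tensor product `Φ ⊗ Ψ` of two superoperators. -/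
def tensMap {a b c d : Type*} (Φ : Matrix a a ℂ → Matrix b b ℂ)
    (Ψ : Matrix c c ℂ → Matrix d d ℂ)
    (ρ : Matrix (a × c) (a × c) ℂ) : Matrix (b × d) (b × d) ℂ :=
  Matrix.of fun p q =>
    Φ (Matrix.of fun i j => Ψ (Matrix.of fun s t => ρ (i, s) (j, t)) p.2 q.2) p.1 q.1

/-- Complete positivity. -/
def IsCP {a b : Type*} [Fintype a] [Fintype b]
    (Φ : Matrix a a ℂ → Matrix b b ℂ) : Prop :=
  ∀ (r : ℕ) (ρ : Matrix (Fin r × a) (Fin r × a) ℂ),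
    ρ.PosSemidef → (idTens Φ ρ).PosSemidef

/-- Trace preservation. -/
def IsTP {a b : Type*} [Fintype a] [Fintype b]
    (Φ : Matrix a a ℂ → Matrix b b ℂ) : Prop :=
  ∀ ρ : Matrix a a ℂ, (Φ ρ).trace = ρ.trace

/-- Max-relative entropy `D_max(ρ‖σ) = log inf {t : ρ ≤ t σ}` (`+∞` if infeasible). -/
def Dmax {n : Type*} [Fintype n] (ρ σ : Matrix n n ℂ) : EReal :=
  sInf {x : EReal | ∃ t : ℝ, x = (Real.log t : EReal) ∧ (t • σ - ρ).PosSemidef}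

/-! The Gram matrices of `√(√M ρ √M) √σ` and `√ρ (√M √σ)` coincide (both are
`√σ √M ρ √M √σ`), so the two have the same trace norm, and the Hölder bound
`‖X Y‖₁² ≤ tr(XᴴX) tr(YᴴY)` gives `tr ρ · tr(√σ M √σ) = tr(M σ)`. For the Hölder bound put
`Z = X Y`, `B = ZᴴZ` and `W = Z B^{-1/2} Yᴴ`, with `B^{-1/2}` the inverse square root on the
support of `B`: then `tr √B = tr(Xᴴ W)`, Cauchy–Schwarz for the Frobenius inner product applies,
and `WᴴW = Y P Yᴴ` with `P` the support projection of `B`, so `tr(WᴴW) ≤ tr(YᴴY)`. -/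

open scoped MatrixOrder

lemma isIdempotentElem_inv_sqrt_mul_mul_inv_sqrt (x : ℝ) :
    IsIdempotentElem ((√x)⁻¹ * x * (√x)⁻¹) := by
  rcases le_or_gt x 0 with hx | hx
  · simp [IsIdempotentElem, Real.sqrt_eq_zero'.mpr hx]
  · have h_one : (√x)⁻¹ * x * (√x)⁻¹ = 1 := by
      field_simp
      exact (Real.sq_sqrt hx.le).symm
    rw [h_one]
    exact IsIdempotentElem.one

section

variable {n : Type*} [Fintype n] [DecidableEq n]

lemma mfun_eq_cfc {A : Matrix n n ℂ} (hA : A.IsHermitian) (f : ℝ → ℝ) : mfun A f = cfc f A := by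
  rw [hA.cfc_eq, IsHermitian.cfc, Unitary.conjStarAlgAut_apply, mfun, dif_pos hA]
  rfl

lemma conjTranspose_msqrt {A : Matrix n n ℂ} (hA : A.IsHermitian) : (msqrt A)ᴴ = msqrt A := by
  rw [msqrt, mfun_eq_cfc hA]
  exact cfc_predicate Real.sqrt A

lemma msqrt_mul_self {A : Matrix n n ℂ} (hA : A.PosSemidef) : msqrt A * msqrt A = A := by
  rw [msqrt, mfun_eq_cfc hA.1, ← cfc_mul Real.sqrt Real.sqrt A]
  conv_rhs => rw [← cfc_id' ℝ A]
  exact cfc_congr fun x hx => Real.mul_self_sqrt (spectrum_nonneg_of_nonneg hA.nonneg hx)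

lemma conjTranspose_mul_self_msqrt_mul {m : Type*} {A : Matrix n n ℂ} (hA : A.PosSemidef)
    (C : Matrix n m ℂ) : (msqrt A * C)ᴴ * (msqrt A * C) = Cᴴ * A * C := by
  rw [conjTranspose_mul, conjTranspose_msqrt hA.1, Matrix.mul_assoc, ← Matrix.mul_assoc (msqrt A),
    msqrt_mul_self hA, Matrix.mul_assoc]

lemma isStarProjection_cfc {B : Matrix n n ℂ} {f : ℝ → ℝ}
    (hf : ∀ x ∈ spectrum ℝ B, IsIdempotentElem (f x)) : IsStarProjection (cfc f B) :=
  ⟨by rw [IsIdempotentElem, ← cfc_mul f f B (B.finite_real_spectrum.continuousOn _)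
      (B.finite_real_spectrum.continuousOn _)]; exact cfc_congr hf, cfc_predicate f B⟩

lemma _root_.IsStarProjection.re_trace_mul_mul_conjTranspose_le {m : Type*} [Fintype m]
    {P : Matrix n n ℂ} (hP : IsStarProjection P) (Y : Matrix m n ℂ) :
    (Y * P * Yᴴ).trace.re ≤ (Y * Yᴴ).trace.re := by
  have h := (hP.one_sub_nonneg.posSemidef.mul_mul_conjTranspose_same Y).trace_nonneg
  rw [Matrix.mul_sub, Matrix.sub_mul, Matrix.mul_one, trace_sub, sub_nonneg] at h
  exact (Complex.le_def.mp h).1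

lemma norm_trace_conjTranspose_mul_sq_le (X Y : Matrix n n ℂ) :
    ‖(Xᴴ * Y).trace‖ ^ 2 ≤ (Xᴴ * X).trace.re * (Yᴴ * Y).trace.re := by
  let := toMatrixSeminormedAddCommGroup (1 : Matrix n n ℂ) PosSemidef.one
  let := toMatrixInnerProductSpace (1 : Matrix n n ℂ) PosSemidef.one
  have inner_eq (A B : Matrix n n ℂ) : inner ℂ A B = (Aᴴ * B).trace := by
    change (B * 1 * Aᴴ).trace = _
    rw [Matrix.mul_one, trace_mul_comm]
  calc ‖(Xᴴ * Y).trace‖ ^ 2 ≤ (‖X‖ * ‖Y‖) ^ 2 := by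
        rw [← inner_eq]; gcongr; exact norm_inner_le_norm X Y
    _ = (Xᴴ * X).trace.re * (Yᴴ * Y).trace.re := by
        rw [mul_pow, @norm_sq_eq_re_inner ℂ, @norm_sq_eq_re_inner ℂ, inner_eq, inner_eq]
        rfl

theorem traceNorm_mul_sq_le (X Y : Matrix n n ℂ) :
    traceNorm (X * Y) ^ 2 ≤ (Xᴴ * X).trace.re * (Yᴴ * Y).trace.re := by
  set Z := X * Y
  set B := Zᴴ * Z
  have hB : B.IsHermitian := (posSemidef_conjTranspose_mul_self Z).1
  have hcont (f : ℝ → ℝ) : ContinuousOn f (spectrum ℝ B) := B.finite_real_spectrum.continuousOn _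
  -- `(√x)⁻¹` vanishes for `x ≤ 0`, so `g` is the inverse square root of `B` on its support.
  set g := cfc (fun x => (√x)⁻¹) B
  have hg : gᴴ = g := (cfc_predicate _ B : IsSelfAdjoint g)
  have hsqrt : msqrt B = g * B := by
    conv_rhs => rw [← cfc_id' ℝ B]
    rw [msqrt, mfun_eq_cfc hB, ← cfc_mul _ _ B (hcont _) (hcont _)]
    exact cfc_congr fun x _ => by rw [inv_mul_eq_div, Real.div_sqrt]
  have hP : IsStarProjection (g * B * g) := by
    have := isStarProjection_cfc (B := B) fun x _ => isIdempotentElem_inv_sqrt_mul_mul_inv_sqrt x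
    rwa [cfc_mul _ _ B (hcont _) (hcont _), cfc_mul _ _ B (hcont _) (hcont _), cfc_id' ℝ B] at this
  set W := Z * g * Yᴴ
  have htr : (msqrt B).trace = (Xᴴ * W).trace := by
    rw [hsqrt, trace_mul_comm]
    simp only [B, W, Z, conjTranspose_mul, Matrix.mul_assoc]
    rw [trace_mul_comm]
    simp only [Matrix.mul_assoc]
  have hW : Wᴴ * W = Y * (g * B * g) * Yᴴ := by
    simp only [W, B, conjTranspose_mul, conjTranspose_conjTranspose, hg, Matrix.mul_assoc]
  calc traceNorm Z ^ 2 = (Xᴴ * W).trace.re ^ 2 := by rw [traceNorm, htr]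
    _ ≤ ‖(Xᴴ * W).trace‖ ^ 2 := by
        rw [← sq_abs]; gcongr; exact Complex.abs_re_le_norm _
    _ ≤ (Xᴴ * X).trace.re * (Wᴴ * W).trace.re := norm_trace_conjTranspose_mul_sq_le X W
    _ ≤ (Xᴴ * X).trace.re * (Yᴴ * Y).trace.re := by
        refine mul_le_mul_of_nonneg_left ?_
          (Complex.le_def.mp (posSemidef_conjTranspose_mul_self X).trace_nonneg).1
        rw [hW, trace_mul_comm Yᴴ]
        exact hP.re_trace_mul_mul_conjTranspose_le Y

end

/-- Fidelity bound: `‖(√M ρ √M)^{1/2} σ^{1/2}‖₁² ≤ tr[M σ]`. -/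
theorem fidelity_bound {n : Type*} [Fintype n] [DecidableEq n]
    (ρ σ M : Matrix n n ℂ) (hρ : IsDensity ρ)
    (hσ : σ.PosSemidef) (hM : M.PosSemidef) :
    traceNorm (msqrt (msqrt M * ρ * msqrt M) * msqrt σ) ^ 2
      ≤ ((M * σ).trace).re := by
  obtain ⟨hρ, htr⟩ := hρ
  have hA : (msqrt M * ρ * msqrt M).PosSemidef := by
    simpa only [conjTranspose_msqrt hM.1] using hρ.mul_mul_conjTranspose_same (msqrt M)
  have hgram :
      (msqrt (msqrt M * ρ * msqrt M) * msqrt σ)ᴴ * (msqrt (msqrt M * ρ * msqrt M) * msqrt σ)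
        = (msqrt ρ * (msqrt M * msqrt σ))ᴴ * (msqrt ρ * (msqrt M * msqrt σ)) := by
    rw [conjTranspose_mul_self_msqrt_mul hA, conjTranspose_mul_self_msqrt_mul hρ]
    simp only [conjTranspose_mul, conjTranspose_msqrt hM.1, Matrix.mul_assoc]
  calc traceNorm (msqrt (msqrt M * ρ * msqrt M) * msqrt σ) ^ 2
      = traceNorm (msqrt ρ * (msqrt M * msqrt σ)) ^ 2 := by rw [traceNorm, traceNorm, hgram]
    _ ≤ ((msqrt ρ)ᴴ * msqrt ρ).trace.re * ((msqrt M * msqrt σ)ᴴ * (msqrt M * msqrt σ)).trace.re :=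
        traceNorm_mul_sq_le _ _
    _ = ((M * σ).trace).re := by
        rw [conjTranspose_msqrt hρ.1, msqrt_mul_self hρ, htr, Complex.one_re, one_mul,
          conjTranspose_mul_self_msqrt_mul hM, conjTranspose_msqrt hσ.1, trace_mul_cycle,
          msqrt_mul_self hσ, trace_mul_comm]

end QIT
end
end

section
/- Key trace inequality in the Petz bound: for a density matrix ρ_{AB} on A ⊗ B with d_A = dim A and α ∈ [1/2,1], one has tr[ρ_{AB}^{3/2} (I_A ⊗ (tr_A ρ_{AB}^α)^{−1/(2α)})] ≤ d_A, where the inverse is taken on the support. -/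
open scoped Kronecker ComplexOrder
open Matrix

attribute [local instance] Classical.propDecidable

noncomputable section

namespace QIT

/-!
Diagonalise `ρ = ∑ₖ λₖ |uₖ⟩⟨uₖ|` and `σ = tr_A ρ^α = ∑ⱼ μⱼ |wⱼ⟩⟨wⱼ|`, and let
`c_{k,(i,j)} = |⟨uₖ, eᵢ ⊗ wⱼ⟩|²`, a matrix with unit row sums. The trace equals
`∑ λₖ c_{k,(i,j)} (λₖ^α / μⱼ)^{1/(2α)}`, which by concavity of `x ↦ x^{1/(2α)}` (this is where
`α ≥ 1/2` enters) is at most `(∑ λₖ c_{k,(i,j)} λₖ^α / μⱼ)^{1/(2α)}`. For fixed `k` and `i`, the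
block `g` of `uₖ` over `{i} × B` satisfies `λₖ^α |⟨g, y⟩|² ≤ ⟨eᵢ ⊗ y, ρ^α (eᵢ ⊗ y)⟩ ≤ ⟨y, σ y⟩`
for all `y`, which forces `λₖ^α ⟨g, σ⁻¹ g⟩ ≤ 1`. Summing over `i` bounds the mean by `d_A`, and
`d_A^{1/(2α)} ≤ d_A`.
-/

section Spectral

variable {n m : Type*} [Fintype n] [Fintype m] [DecidableEq n]

lemma mpow_of_isHermitian {A : Matrix n n ℂ} (hA : A.IsHermitian) (p : ℝ) :
    mpow A p = (hA.eigenvectorUnitary : Matrix n n ℂ) *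
      diagonal (fun i => ((hA.eigenvalues i ^ p : ℝ) : ℂ)) *
      (hA.eigenvectorUnitary : Matrix n n ℂ)ᴴ := by
  rw [mpow, mfun, dif_pos hA]
  rfl

lemma _root_.Matrix.PosSemidef.mpow {A : Matrix n n ℂ} (hA : A.PosSemidef) (p : ℝ) :
    (mpow A p).PosSemidef := by
  rw [mpow_of_isHermitian hA.1]
  refine PosSemidef.mul_mul_conjTranspose_same (PosSemidef.diagonal fun i => ?_) _
  exact Complex.zero_le_real.mpr (Real.rpow_nonneg (hA.eigenvalues_nonneg i) p)

lemma _root_.Matrix.IsHermitian.conj_diagonal_eigenvalues {A : Matrix n n ℂ} (hA : A.IsHermitian) :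
    (hA.eigenvectorUnitary : Matrix n n ℂ) * diagonal (fun i => (hA.eigenvalues i : ℂ)) *
      (hA.eigenvectorUnitary : Matrix n n ℂ)ᴴ = A := by
  conv_rhs => rw [hA.spectral_theorem, Unitary.conjStarAlgAut_apply]
  rfl

lemma dotProduct_conj_diagonal_mulVec (V : Matrix m n ℂ) (d : n → ℝ) (y : m → ℂ) :
    star y ⬝ᵥ ((V * diagonal (fun i => (d i : ℂ)) * Vᴴ) *ᵥ y)
      = ((∑ k, d k * Complex.normSq ((Vᴴ *ᵥ y) k) : ℝ) : ℂ) := by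
  rw [← mulVec_mulVec, ← mulVec_mulVec, dotProduct_mulVec,
    show star y ᵥ* V = star (Vᴴ *ᵥ y) by rw [star_mulVec, conjTranspose_conjTranspose]]
  push_cast
  refine Finset.sum_congr rfl fun k _ => ?_
  rw [mulVec_diagonal, Pi.star_apply, RCLike.star_def, Complex.normSq_eq_conj_mul_self]
  ring

lemma trace_conj_diagonal_mul_conj_diagonal (U V : Matrix n n ℂ) (f g : n → ℝ) :
    (U * diagonal (fun i => (f i : ℂ)) * Uᴴ * (V * diagonal (fun i => (g i : ℂ)) * Vᴴ)).trace
      = ((∑ k, ∑ p, f k * g p * Complex.normSq ((Uᴴ * V) k p) : ℝ) : ℂ) := by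
  set Df := diagonal (fun i => (f i : ℂ))
  set Dg := diagonal (fun i => (g i : ℂ))
  have hcycle : (U * Df * Uᴴ * (V * Dg * Vᴴ)).trace = (Df * (Uᴴ * V) * Dg * (Uᴴ * V)ᴴ).trace := by
    rw [conjTranspose_mul, conjTranspose_conjTranspose]
    simp only [Matrix.mul_assoc]
    rw [trace_mul_comm U]
    simp only [Matrix.mul_assoc]
  rw [hcycle]
  generalize Uᴴ * V = M
  push_cast
  simp only [trace, diag]
  refine Finset.sum_congr rfl fun k _ => ?_
  rw [mul_apply]
  refine Finset.sum_congr rfl fun p _ => ?_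
  rw [mul_diagonal, diagonal_mul, conjTranspose_apply, RCLike.star_def,
    Complex.normSq_eq_conj_mul_self]
  ring

lemma sum_normSq_apply_of_mem_unitaryGroup {M : Matrix n n ℂ} (hM : M ∈ unitaryGroup n ℂ)
    (k : n) : ∑ p, Complex.normSq (M k p) = 1 := by
  have hkk := congrFun (congrFun (mem_unitaryGroup_iff.mp hM) k) k
  rw [mul_apply, one_apply_eq] at hkk
  simp only [star_apply, RCLike.star_def, Complex.mul_conj] at hkk
  exact_mod_cast hkk

lemma IsDensity.sum_eigenvalues_eq_one {ρ : Matrix n n ℂ} (hρ : IsDensity ρ) :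
    ∑ i, hρ.1.1.eigenvalues i = 1 := by
  apply RCLike.ofReal_injective (K := ℂ)
  rw [RCLike.ofReal_sum, RCLike.ofReal_one]
  exact hρ.1.1.trace_eq_sum_eigenvalues.symm.trans hρ.2

end Spectral

lemma ptraceFst_eq_sum_submatrix {a b : Type*} [Fintype a] (X : Matrix (a × b) (a × b) ℂ) :
    ptraceFst X = ∑ i, X.submatrix (Prod.mk i) (Prod.mk i) := by
  ext j l
  simp [ptraceFst, Matrix.sum_apply]

lemma _root_.Matrix.PosSemidef.ptraceFst {a b : Type*} [Fintype a] [Fintype b]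
    {X : Matrix (a × b) (a × b) ℂ} (hX : X.PosSemidef) : (ptraceFst X).PosSemidef := by
  rw [ptraceFst_eq_sum_submatrix]
  exact posSemidef_sum _ fun i _ => hX.submatrix _

lemma mul_one_kronecker_apply {m a b : Type*} [Fintype a] [Fintype b] [DecidableEq a]
    (A : Matrix m (a × b) ℂ) (W : Matrix b b ℂ) (k : m) (i : a) (j : b) :
    (A * ((1 : Matrix a a ℂ) ⊗ₖ W)) k (i, j) = ((fun l => A k (i, l)) ᵥ* W) j := by
  simp [mul_apply, vecMul, dotProduct, Fintype.sum_prod_type, one_apply]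

section PartialTrace

variable {a b : Type*} [Fintype a] [Fintype b] [DecidableEq a] [DecidableEq b]

lemma one_kronecker_conj_diagonal (W : Matrix b b ℂ) (g : b → ℝ) :
    (1 : Matrix a a ℂ) ⊗ₖ (W * diagonal (fun j => (g j : ℂ)) * Wᴴ)
      = ((1 : Matrix a a ℂ) ⊗ₖ W) * diagonal (fun p : a × b => (g p.2 : ℂ)) *
          ((1 : Matrix a a ℂ) ⊗ₖ W)ᴴ := by
  have hdiag : diagonal (fun p : a × b => (g p.2 : ℂ))
      = (1 : Matrix a a ℂ) ⊗ₖ diagonal (fun j => (g j : ℂ)) := by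
    rw [← diagonal_one, diagonal_kronecker_diagonal]
    simp
  rw [hdiag, conjTranspose_kronecker, conjTranspose_one, ← mul_kronecker_mul,
    ← mul_kronecker_mul, Matrix.one_mul, Matrix.one_mul]

lemma re_trace_mpow_mul_one_kronecker_mpow {A : Matrix (a × b) (a × b) ℂ} {B : Matrix b b ℂ}
    (hA : A.IsHermitian) (hB : B.IsHermitian) (p q : ℝ) :
    (mpow A p * ((1 : Matrix a a ℂ) ⊗ₖ mpow B q)).trace.re
      = ∑ k, ∑ i, hA.eigenvalues k ^ p * hB.eigenvalues i.2 ^ q *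
          Complex.normSq (((hA.eigenvectorUnitary : Matrix (a × b) (a × b) ℂ)ᴴ *
            ((1 : Matrix a a ℂ) ⊗ₖ (hB.eigenvectorUnitary : Matrix b b ℂ))) k i) := by
  rw [mpow_of_isHermitian hA, mpow_of_isHermitian hB, one_kronecker_conj_diagonal,
    trace_conj_diagonal_mul_conj_diagonal, Complex.ofReal_re]

lemma eigenvalue_mul_normSq_le_dotProduct_ptraceFst_mulVec (U : Matrix (a × b) (a × b) ℂ)
    {ν : a × b → ℝ} (hν : 0 ≤ ν) (k : a × b) (i : a) (y : b → ℂ) :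
    ((ν k * Complex.normSq (((U.submatrix (Prod.mk i) id)ᴴ *ᵥ y) k) : ℝ) : ℂ)
      ≤ star y ⬝ᵥ (ptraceFst (U * diagonal (fun j => (ν j : ℂ)) * Uᴴ) *ᵥ y) := by
  set P := U * diagonal (fun j => (ν j : ℂ)) * Uᴴ
  have hP : P.PosSemidef :=
    (PosSemidef.diagonal fun j => Complex.zero_le_real.mpr (hν j)).mul_mul_conjTranspose_same U
  have hblock : P.submatrix (Prod.mk i) (Prod.mk i)
      = U.submatrix (Prod.mk i) id * diagonal (fun j => (ν j : ℂ)) *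
          (U.submatrix (Prod.mk i) id)ᴴ := by
    rw [submatrix_mul _ _ _ id _ Function.bijective_id,
      submatrix_mul _ _ _ id _ Function.bijective_id, conjTranspose_submatrix]
    simp
  calc ((ν k * Complex.normSq (((U.submatrix (Prod.mk i) id)ᴴ *ᵥ y) k) : ℝ) : ℂ)
      ≤ ((∑ l, ν l * Complex.normSq (((U.submatrix (Prod.mk i) id)ᴴ *ᵥ y) l) : ℝ) : ℂ) :=
        Complex.real_le_real.mpr <| Finset.single_le_sum
          (fun l _ => mul_nonneg (hν l) (Complex.normSq_nonneg _)) (Finset.mem_univ k)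
    _ = star y ⬝ᵥ (P.submatrix (Prod.mk i) (Prod.mk i) *ᵥ y) := by
        rw [hblock, dotProduct_conj_diagonal_mulVec]
    _ ≤ ∑ i', star y ⬝ᵥ (P.submatrix (Prod.mk i') (Prod.mk i') *ᵥ y) :=
        Finset.single_le_sum (fun i' _ => (hP.submatrix _).dotProduct_mulVec_nonneg y)
          (Finset.mem_univ i)
    _ = star y ⬝ᵥ (ptraceFst P *ᵥ y) := by
        rw [ptraceFst_eq_sum_submatrix, sum_mulVec, dotProduct_sum]

end PartialTrace

lemma mul_sum_normSq_mul_inv_le_one {ι : Type*} [Fintype ι] (μ : ι → ℝ) (g : ι → ℂ) {s : ℝ}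
    (hs : 0 ≤ s) (h : ∀ x : ι → ℂ, s * Complex.normSq (g ⬝ᵥ x) ≤ ∑ j, μ j * Complex.normSq (x j)) :
    s * ∑ j, Complex.normSq (g j) * (μ j)⁻¹ ≤ 1 := by
  set t := ∑ j, Complex.normSq (g j) * (μ j)⁻¹
  -- for this test vector the hypothesis reads `s * t ^ 2 ≤ t`
  set x : ι → ℂ := fun j => star (g j) * (((μ j)⁻¹ : ℝ) : ℂ)
  have hx := h x
  have hlhs : g ⬝ᵥ x = (t : ℂ) := by
    simp only [t, x, dotProduct]
    push_cast
    refine Finset.sum_congr rfl fun j _ => ?_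
    rw [← mul_assoc, RCLike.star_def, Complex.mul_conj]
  have hrhs : ∑ j, μ j * Complex.normSq (x j) = t := by
    simp only [t, x]
    refine Finset.sum_congr rfl fun j _ => ?_
    rw [Complex.normSq_mul, RCLike.star_def, Complex.normSq_conj, Complex.normSq_ofReal]
    rcases eq_or_ne (μ j) 0 with h0 | h0
    · simp [h0]
    · field_simp
  rw [hlhs, hrhs, Complex.normSq_ofReal] at hx
  rcases le_or_gt t 0 with ht | ht <;> nlinarith

lemma _root_.Matrix.IsHermitian.mul_sum_normSq_vecMul_mul_inv_le_one {n : Type*} [Fintype n]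
    [DecidableEq n] {σ : Matrix n n ℂ} (hσ : σ.IsHermitian) (g : n → ℂ) {s : ℝ} (hs : 0 ≤ s)
    (h : ∀ y, ((s * Complex.normSq (g ⬝ᵥ y) : ℝ) : ℂ) ≤ star y ⬝ᵥ (σ *ᵥ y)) :
    s * ∑ j, Complex.normSq ((g ᵥ* (hσ.eigenvectorUnitary : Matrix n n ℂ)) j) *
      (hσ.eigenvalues j)⁻¹ ≤ 1 := by
  set W := (hσ.eigenvectorUnitary : Matrix n n ℂ)
  refine mul_sum_normSq_mul_inv_le_one _ _ hs fun x => ?_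
  have hquad : star (W *ᵥ x) ⬝ᵥ (σ *ᵥ (W *ᵥ x))
      = ((∑ j, hσ.eigenvalues j * Complex.normSq (x j) : ℝ) : ℂ) := by
    calc star (W *ᵥ x) ⬝ᵥ (σ *ᵥ (W *ᵥ x))
        = star (W *ᵥ x) ⬝ᵥ
            ((W * diagonal (fun j => (hσ.eigenvalues j : ℂ)) * Wᴴ) *ᵥ (W *ᵥ x)) := by
          rw [hσ.conj_diagonal_eigenvalues]
      _ = _ := by
          rw [dotProduct_conj_diagonal_mulVec, mulVec_mulVec, ← star_eq_conjTranspose,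
            Unitary.coe_star_mul_self, one_mulVec]
  have := h (W *ᵥ x)
  rwa [hquad, dotProduct_mulVec, Complex.real_le_real] at this

lemma sum_rpow_mul_le_card {κ a b : Type*} [Fintype κ] [Fintype a] [Fintype b]
    {lam : κ → ℝ} (hlam : 0 ≤ lam) (hlam_sum : ∑ k, lam k = 1)
    {c : κ → a × b → ℝ} (hc : 0 ≤ c) (hc_sum : ∀ k, ∑ p, c k p = 1)
    {μ : b → ℝ} (hμ : 0 ≤ μ) {α : ℝ} (hα : 1 / 2 ≤ α)
    (hblock : ∀ k i, lam k ^ α * ∑ j, c k (i, j) * (μ j)⁻¹ ≤ 1) :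
    ∑ k, ∑ p, lam k ^ (3 / 2 : ℝ) * μ p.2 ^ (-(1 / (2 * α))) * c k p
      ≤ (Fintype.card a : ℝ) := by
  set β := 1 / (2 * α)
  have hα0 : 0 < α := by linarith
  have hβ0 : 0 < β := by positivity
  have hβ1 : β ≤ 1 := by rw [div_le_one (by positivity)]; linarith
  set w : κ × (a × b) → ℝ := fun q => lam q.1 * c q.1 q.2
  set z : κ × (a × b) → ℝ := fun q => lam q.1 ^ α * (μ q.2.2)⁻¹
  have hw : ∀ q, 0 ≤ w q := fun q => mul_nonneg (hlam q.1) (hc q.1 q.2)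
  have hz : ∀ q, 0 ≤ z q := fun q =>
    mul_nonneg (Real.rpow_nonneg (hlam q.1) α) (inv_nonneg.mpr (hμ q.2.2))
  have hw_sum : ∑ q, w q = 1 := by
    simp only [w, Fintype.sum_prod_type, ← Finset.mul_sum, hc_sum, mul_one, hlam_sum]
  have hterm : ∀ k p, lam k ^ (3 / 2 : ℝ) * μ p.2 ^ (-β) * c k p = w (k, p) * z (k, p) ^ β := by
    intro k p
    simp only [w, z]
    rw [Real.mul_rpow (Real.rpow_nonneg (hlam k) α) (inv_nonneg.mpr (hμ p.2)),
      ← Real.rpow_mul (hlam k), Real.inv_rpow (hμ p.2), ← Real.rpow_neg (hμ p.2),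
      show α * β = 1 / 2 by simp only [β]; field_simp,
      show (3 / 2 : ℝ) = 1 + 1 / 2 by norm_num, Real.rpow_add' (hlam k) (by norm_num),
      Real.rpow_one]
    ring
  have hjensen : ∑ q, w q * z q ^ β ≤ (∑ q, w q * z q) ^ β := by
    simpa only [smul_eq_mul] using (Real.concaveOn_rpow hβ0.le hβ1).le_map_sum
      (fun q _ => hw q) hw_sum (fun q _ => Set.mem_Ici.mpr (hz q))
  have hmean : ∑ q, w q * z q ≤ Fintype.card a := by
    calc ∑ q, w q * z q = ∑ k, lam k * ∑ i, lam k ^ α * ∑ j, c k (i, j) * (μ j)⁻¹ := by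
          simp only [w, z, Fintype.sum_prod_type, Finset.mul_sum]
          refine Finset.sum_congr rfl fun k _ => Finset.sum_congr rfl fun i _ =>
            Finset.sum_congr rfl fun j _ => ?_
          ring
      _ ≤ ∑ k, lam k * ∑ _i : a, (1 : ℝ) := by
          gcongr with k _ i _
          · exact hlam k
          · exact hblock k i
      _ = Fintype.card a := by
          simp only [Finset.sum_const, Finset.card_univ, nsmul_eq_mul, mul_one, ← Finset.sum_mul,
            hlam_sum, one_mul]
  calc ∑ k, ∑ p, lam k ^ (3 / 2 : ℝ) * μ p.2 ^ (-β) * c k p = ∑ q, w q * z q ^ β := by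
        simp only [hterm, Fintype.sum_prod_type]
    _ ≤ (Fintype.card a : ℝ) ^ β :=
        hjensen.trans (Real.rpow_le_rpow (Finset.sum_nonneg fun q _ => mul_nonneg (hw q) (hz q))
          hmean hβ0.le)
    _ ≤ Fintype.card a := by
        rcases Nat.eq_zero_or_pos (Fintype.card a) with h0 | hpos
        · simp [h0, Real.zero_rpow hβ0.ne']
        · exact Real.rpow_le_self_of_one_le (by exact_mod_cast hpos) hβ1

/-- Key trace inequality: `tr[ρ_{AB}^{3/2} (I_A ⊗ (tr_A ρ_{AB}^α)^{-1/(2α)})] ≤ d_A`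
for `α ∈ [1/2, 1]` (inverse taken on the support). -/
theorem key_trace_inequality {a b : Type*} [Fintype a] [Fintype b]
    [DecidableEq a] [DecidableEq b]
    (ρ : Matrix (a × b) (a × b) ℂ) (hρ : IsDensity ρ)
    (α : ℝ) (hα : α ∈ Set.Icc (1 / 2 : ℝ) 1) :
    ((mpow ρ (3 / 2) *
        ((1 : Matrix a a ℂ) ⊗ₖ mpow (ptraceFst (mpow ρ α)) (-(1 / (2 * α))))).trace).re
      ≤ (Fintype.card a : ℝ) := by
  have hσ : (ptraceFst (mpow ρ α)).PosSemidef := (hρ.1.mpow α).ptraceFst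
  set U := (hρ.1.1.eigenvectorUnitary : Matrix (a × b) (a × b) ℂ)
  set W := (hσ.1.eigenvectorUnitary : Matrix b b ℂ)
  have hM : Uᴴ * ((1 : Matrix a a ℂ) ⊗ₖ W) ∈ unitaryGroup (a × b) ℂ :=
    mul_mem (Unitary.star_mem hρ.1.1.eigenvectorUnitary.2)
      (kronecker_mem_unitary (one_mem _) hσ.1.eigenvectorUnitary.2)
  rw [re_trace_mpow_mul_one_kronecker_mpow hρ.1.1 hσ.1]
  refine sum_rpow_mul_le_card hρ.1.eigenvalues_nonneg hρ.sum_eigenvalues_eq_one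
    (fun k p => Complex.normSq_nonneg _) (sum_normSq_apply_of_mem_unitaryGroup hM)
    hσ.eigenvalues_nonneg hα.1 fun k i => ?_
  have hblock := hσ.1.mul_sum_normSq_vecMul_mul_inv_le_one (fun l => Uᴴ k (i, l))
    (Real.rpow_nonneg (hρ.1.eigenvalues_nonneg k) α) fun y => by
      rw [mpow_of_isHermitian hρ.1.1]
      exact eigenvalue_mul_normSq_le_dotProduct_ptraceFst_mulVec U
        (fun l => Real.rpow_nonneg (hρ.1.eigenvalues_nonneg l) α) k i y
  simpa only [mul_one_kronecker_apply] using hblock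

end QIT
end
end

section
/- Tensor-product structure of polar sets: let 𝒜₁ ⊆ 𝒟(R), 𝒜₂ ⊆ 𝒟(B) be sets of density matrices and 𝒜₃ := {(id_R ⊗ 𝒩)(ρ_{RA}) : ρ_{RA} ∈ 𝒟(RA) with tr_A ρ_{RA} ∈ 𝒜₁} where 𝒜₂ = 𝒩(𝒟(A)) for a CPTP map 𝒩. If X_R ≥ 0 satisfies tr[X_R Y] ≤ 1 for all Y ∈ 𝒜₁ and X_B ≥ 0 satisfies tr[X_B Y] ≤ 1 for all Y ∈ 𝒜₂, then tr[(X_R ⊗ X_B) Z] ≤ 1 for all Z ∈ 𝒜₃. -/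
open scoped Kronecker ComplexOrder
open Matrix

attribute [local instance] Classical.propDecidable

noncomputable section

namespace QIT

/-
Write `X_R = B† B` and `M := tr_R[(X_R ⊗ 1) ρ_{RA}]`. Cycling `B ⊗ 1` inside the partial trace
gives `M = tr_R[(B ⊗ 1) ρ_{RA} (B ⊗ 1)†] ≥ 0`, and `tr M = tr[X_R ρ_R] ≤ 1`. Expanding the trace
blockwise, `tr[(X_R ⊗ X_B)(id_R ⊗ 𝒩)(ρ_{RA})] = tr[X_B 𝒩(M)]`, and the polar condition on `X_B`
applied to the state `M / tr M` bounds this by `tr M`.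
-/

section PartialTrace

variable {r a : Type*} [Fintype r]

lemma ptraceFst_eq_sum_submatrix_s14 (Z : Matrix (r × a) (r × a) ℂ) :
    ptraceFst Z = ∑ k, Z.submatrix (Prod.mk k) (Prod.mk k) := by
  ext s t
  simp [ptraceFst, Matrix.sum_apply]

lemma posSemidef_ptraceFst [Fintype a] {Z : Matrix (r × a) (r × a) ℂ} (hZ : Z.PosSemidef) :
    (ptraceFst Z).PosSemidef := by
  rw [ptraceFst_eq_sum_submatrix_s14]
  exact Finset.sum_induction _ _ (fun _ _ => .add) .zero fun k _ => hZ.submatrix _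

section KroneckerOne

variable [Fintype a] [DecidableEq a]

lemma ptraceFst_kronecker_one_mul_comm (A : Matrix r r ℂ) (Z : Matrix (r × a) (r × a) ℂ) :
    ptraceFst ((A ⊗ₖ (1 : Matrix a a ℂ)) * Z) = ptraceFst (Z * (A ⊗ₖ 1)) := by
  ext s t
  simp only [ptraceFst, of_apply, mul_apply, kroneckerMap_apply, one_apply,
    Fintype.sum_prod_type, mul_ite, mul_one, mul_zero, ite_mul, zero_mul,
    Finset.sum_ite_eq, Finset.sum_ite_eq', Finset.mem_univ, if_true]
  rw [Finset.sum_comm]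
  simp [mul_comm]

open scoped MatrixOrder in
lemma posSemidef_ptraceFst_kronecker_one_mul {X : Matrix r r ℂ} {Z : Matrix (r × a) (r × a) ℂ}
    (hX : X.PosSemidef) (hZ : Z.PosSemidef) :
    (ptraceFst ((X ⊗ₖ (1 : Matrix a a ℂ)) * Z)).PosSemidef := by
  obtain ⟨B, rfl⟩ := CStarAlgebra.nonneg_iff_eq_star_mul_self.mp hX.nonneg
  have hB : (star B * B) ⊗ₖ (1 : Matrix a a ℂ) = (Bᴴ ⊗ₖ 1) * (B ⊗ₖ 1) := by
    rw [← mul_kronecker_mul, mul_one, star_eq_conjTranspose]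
  rw [hB, Matrix.mul_assoc, ptraceFst_kronecker_one_mul_comm]
  simpa [conjTranspose_kronecker, Matrix.mul_assoc] using
    posSemidef_ptraceFst (hZ.mul_mul_conjTranspose_same (B ⊗ₖ (1 : Matrix a a ℂ)))

lemma trace_ptraceFst_kronecker_one_mul (X : Matrix r r ℂ) (Z : Matrix (r × a) (r × a) ℂ) :
    (ptraceFst ((X ⊗ₖ (1 : Matrix a a ℂ)) * Z)).trace = (X * ptraceSnd Z).trace := by
  simp only [Matrix.trace, Matrix.diag, ptraceFst, ptraceSnd, of_apply, mul_apply,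
    kroneckerMap_apply, one_apply, Fintype.sum_prod_type, mul_ite, mul_one, mul_zero,
    ite_mul, zero_mul, Finset.sum_ite_eq, Finset.mem_univ, if_true, Finset.mul_sum]
  rw [Finset.sum_comm]
  exact Finset.sum_congr rfl fun _ _ => Finset.sum_comm

lemma ptraceFst_kronecker_one_mul_eq_sum (X : Matrix r r ℂ) (Z : Matrix (r × a) (r × a) ℂ) :
    ptraceFst ((X ⊗ₖ (1 : Matrix a a ℂ)) * Z) =
      ∑ k, ∑ i, X k i • Z.submatrix (Prod.mk i) (Prod.mk k) := by
  ext s t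
  simp only [ptraceFst, of_apply, mul_apply, kroneckerMap_apply, one_apply,
    Fintype.sum_prod_type, mul_ite, mul_one, mul_zero, ite_mul, zero_mul,
    Finset.sum_ite_eq, Finset.mem_univ, if_true, Matrix.sum_apply, Matrix.smul_apply,
    submatrix_apply, smul_eq_mul]

lemma trace_kronecker_mul_idTens {b : Type*} [Fintype b] (N : Matrix a a ℂ →ₗ[ℂ] Matrix b b ℂ)
    (X : Matrix r r ℂ) (Y : Matrix b b ℂ) (Z : Matrix (r × a) (r × a) ℂ) :
    ((X ⊗ₖ Y) * idTens N Z).trace = (Y * N (ptraceFst ((X ⊗ₖ 1) * Z))).trace := by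
  simp only [ptraceFst_kronecker_one_mul_eq_sum, map_sum, map_smul, Matrix.mul_sum,
    Matrix.mul_smul, trace_sum, trace_smul, smul_eq_mul]
  simp only [Matrix.trace, Matrix.diag, mul_apply, kroneckerMap_apply, Fintype.sum_prod_type,
    Finset.mul_sum, idTens, of_apply]
  refine Finset.sum_congr rfl fun _ _ => ?_
  rw [Finset.sum_comm]
  simp only [mul_assoc]
  rfl

end KroneckerOne

lemma re_trace_mul_map_le_re_trace {b : Type*} [Fintype a] [Fintype b]
    (N : Matrix a a ℂ →ₗ[ℂ] Matrix b b ℂ) {Y : Matrix b b ℂ}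
    (hY : ∀ ρ, IsDensity ρ → ((Y * N ρ).trace).re ≤ 1)
    {M : Matrix a a ℂ} (hM : M.PosSemidef) : ((Y * N M).trace).re ≤ M.trace.re := by
  obtain ⟨c, hc0, hc⟩ : ∃ c : ℝ, 0 ≤ c ∧ M.trace = c :=
    ⟨_, (Complex.nonneg_iff.mp hM.trace_nonneg).1, Complex.eq_re_of_ofReal_le hM.trace_nonneg⟩
  rcases hc0.eq_or_lt with rfl | hc_pos
  · simp [hM.trace_eq_zero_iff.mp (by simpa using hc)]
  have hdensity : IsDensity (c⁻¹ • M) :=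
    ⟨hM.smul (inv_nonneg.mpr hc0), by rw [trace_smul, hc]; simp [hc_pos.ne']⟩
  have hbound := hY _ hdensity
  rw [N.map_smul_of_tower, Matrix.mul_smul, trace_smul, Complex.smul_re, smul_eq_mul] at hbound
  rw [hc, Complex.ofReal_re, ← inv_mul_le_one₀ hc_pos]
  exact hbound

end PartialTrace

theorem polar_tensor_general {r a b : Type*} [Fintype r] [Fintype a] [Fintype b]
    (N : Matrix a a ℂ →ₗ[ℂ] Matrix b b ℂ)
    (A1 : Set (Matrix r r ℂ))
    (XR : Matrix r r ℂ) (hXR : XR.PosSemidef)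
    (hXR1 : ∀ Y ∈ A1, ((XR * Y).trace).re ≤ 1)
    (XB : Matrix b b ℂ)
    (hXB1 : ∀ ρ : Matrix a a ℂ, IsDensity ρ → ((XB * N ρ).trace).re ≤ 1) :
    ∀ ρRA : Matrix (r × a) (r × a) ℂ, IsDensity ρRA → ptraceSnd ρRA ∈ A1 →
      (((XR ⊗ₖ XB) * idTens (⇑N) ρRA).trace).re ≤ 1 := by
  intro ρRA hρ hmem
  rw [trace_kronecker_mul_idTens]
  calc _ ≤ (ptraceFst ((XR ⊗ₖ 1) * ρRA)).trace.re :=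
        re_trace_mul_map_le_re_trace N hXB1 (posSemidef_ptraceFst_kronecker_one_mul hXR hρ.1)
    _ = (XR * ptraceSnd ρRA).trace.re := by rw [trace_ptraceFst_kronecker_one_mul]
    _ ≤ 1 := hXR1 _ hmem

/-- Tensor-product structure of polar sets: if `X_R` is in the positive polar of
`𝒜₁ ⊆ 𝒟(R)` and `X_B` is in the positive polar of `𝒩(𝒟(A))`, then `X_R ⊗ X_B` is
in the positive polar of `𝒜₃ = {(id_R ⊗ 𝒩)(ρ_{RA}) : tr_A ρ_{RA} ∈ 𝒜₁}`. -/
theorem polar_tensor {r a b : Type*} [Fintype r] [Fintype a] [Fintype b]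
    [DecidableEq r] [DecidableEq a] [DecidableEq b]
    (N : Matrix a a ℂ →ₗ[ℂ] Matrix b b ℂ) (hCP : IsCP ⇑N) (hTP : IsTP ⇑N)
    (A1 : Set (Matrix r r ℂ)) (hA1 : ∀ Y ∈ A1, IsDensity Y)
    (XR : Matrix r r ℂ) (hXR : XR.PosSemidef)
    (hXR1 : ∀ Y ∈ A1, ((XR * Y).trace).re ≤ 1)
    (XB : Matrix b b ℂ) (hXB : XB.PosSemidef)
    (hXB1 : ∀ ρ : Matrix a a ℂ, IsDensity ρ → ((XB * N ρ).trace).re ≤ 1) :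
    ∀ ρRA : Matrix (r × a) (r × a) ℂ, IsDensity ρRA → ptraceSnd ρRA ∈ A1 →
      (((XR ⊗ₖ XB) * idTens (⇑N) ρRA).trace).re ≤ 1 :=
  polar_tensor_general N A1 XR hXR hXR1 XB hXB1

end QIT
end
end
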